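/- arXiv:1709.04124 — 2 statements merged into one kernel-verified Lean document; each statement's English description precedes it below -/
import Mathlib

section
/- Suppose K ∈ C^1(∂B_1) with K(ξ) = ξ_n + 2, where ξ_n is the last coordinate. Then the integral equation K(η) v(η)^{n/(n-2)} = ∫_{B_1} P(η, ξ) (Pv(ξ))^{(n+2)/(n-2)} dξ has no positive solution v ∈ C(∂B_1), because every solution must satisfy the Kazdan–Warner identity ∫_{∂B_1} (∇_X K) v^{2(n-1)/(n-2)} ds = 0 for all conformal Killing fields X on the sphere, which fails for this K. -/
/-!
For `K = ξ_n + 2` and `X` the gradient field of `ξ_n` on the sphere, `∇_X K = 1 - η_n²`, so the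
Kazdan–Warner integrand is continuous, nonnegative on the sphere and positive off the two poles.
Its integral is then positive, because the `m`-dimensional Hausdorff measure of the unit sphere of
an `(m+1)`-dimensional space is finite and charges the complement of the poles. Finiteness: the
sphere is covered by the images of two compact sets under the two inverse stereographic
projections, which are smooth, hence Lipschitz on compact sets. Positivity: the orthogonal
projection onto a hyperplane containing the polar axis is `1`-Lipschitz and maps the complement
of the poles onto a set containing the open unit ball of the hyperplane.
-/

open MeasureTheory

/-- The volume of the unit ball in `ℝ^n`. -/
noncomputable def ballVol (n : ℕ) : ℝ :=
  (volume (Metric.ball (0 : EuclideanSpace ℝ (Fin n)) 1)).toReal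

/-- The Poisson kernel of the unit ball `B_1 ⊂ ℝ^n`. -/
noncomputable def poissonKernelBall (n : ℕ) (η ξ : EuclideanSpace ℝ (Fin n)) : ℝ :=
  (1 - ‖ξ‖ ^ 2) / ((n : ℝ) * ballVol n * ‖ξ - η‖ ^ n)

/-- The Poisson extension to the unit ball of a boundary function `v`, against the
`(n-1)`-dimensional Hausdorff measure on the unit sphere. -/
noncomputable def poissonExtBall (n : ℕ) (v : EuclideanSpace ℝ (Fin n) → ℝ)
    (ξ : EuclideanSpace ℝ (Fin n)) : ℝ :=
  ∫ η in Metric.sphere (0 : EuclideanSpace ℝ (Fin n)) 1,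
    poissonKernelBall n η ξ * v η ∂μH[(n : ℝ) - 1]

open Metric Module
open scoped ENNReal RealInnerProductSpace

theorem LocallyLipschitzOn.hausdorffMeasure_image_lt_top {X Y : Type*}
    [MetricSpace X] [MeasurableSpace X] [BorelSpace X]
    [MetricSpace Y] [MeasurableSpace Y] [BorelSpace Y] {f : X → Y} {s : Set X}
    (hf : LocallyLipschitzOn s f) (hs : IsCompact s) {d : ℝ} (hd : 0 ≤ d)
    (hs' : μH[d] s < ∞) : μH[d] (f '' s) < ∞ := by
  obtain ⟨K, hK⟩ := hf.exists_lipschitzOnWith_of_compact hs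
  calc μH[d] (f '' s) ≤ (K : ℝ≥0∞) ^ d * μH[d] s := hK.hausdorffMeasure_image_le hd
    _ < ∞ := ENNReal.mul_lt_top (ENNReal.rpow_lt_top_of_nonneg hd ENNReal.coe_ne_top) hs'

section Sphere

variable {E : Type*} [NormedAddCommGroup E] [InnerProductSpace ℝ E]
  [MeasurableSpace E] [BorelSpace E] {k : ℕ} [Fact (finrank ℝ E = k + 1)]

theorem hausdorffMeasure_sphere_inter_inner_nonpos_lt_top {v : E} (hv : ‖v‖ = 1) :
    μH[k] {x ∈ sphere (0 : E) 1 | ⟪v, x⟫ ≤ 0} < ∞ := by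
  have : FiniteDimensional ℝ E := .of_fact_finrank_eq_succ k
  set C := {x ∈ sphere (0 : E) 1 | ⟪v, x⟫ ≤ 0}
  have hC : IsCompact C := (isCompact_sphere 0 1).inter_right
    (isClosed_le (by fun_prop) continuous_const : IsClosed {x : E | ⟪v, x⟫ ≤ 0})
  have hT : IsCompact (stereoToFun v '' C) := hC.image_of_continuousOn <|
    continuousOn_stereoToFun.mono fun x hx => by
      have : ⟪v, x⟫ ≠ 1 := by linarith [hx.2]
      simpa using this
  have hCT : C ⊆ (fun w : (ℝ ∙ v)ᗮ => stereoInvFunAux v w) '' (stereoToFun v '' C) := by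
    rintro x ⟨hx, hxv⟩
    have hne : x ≠ v := by
      rintro rfl
      rw [real_inner_self_eq_norm_sq, hv] at hxv
      norm_num at hxv
    exact ⟨_, Set.mem_image_of_mem _ ⟨hx, hxv⟩,
      congrArg Subtype.val (stereo_left_inv hv (x := ⟨x, hx⟩) hne)⟩
  have hrank : finrank ℝ (ℝ ∙ v)ᗮ = k :=
    Submodule.finrank_orthogonal_span_singleton (by rintro rfl; simp at hv)
  have hTfin : μH[k] (stereoToFun v '' C) < ∞ := by
    rw [← hrank]; exact hT.measure_lt_top
  refine (measure_mono hCT).trans_lt ?_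
  exact ((contDiff_stereoInvFunAux (m := 1)).comp (ℝ ∙ v)ᗮ.subtypeL.contDiff).locallyLipschitz
    |>.locallyLipschitzOn |>.hausdorffMeasure_image_lt_top hT k.cast_nonneg hTfin

theorem hausdorffMeasure_sphere_lt_top : μH[k] (sphere (0 : E) 1) < ∞ := by
  have : Nontrivial E := Module.nontrivial_of_finrank_eq_succ (Fact.out : finrank ℝ E = k + 1)
  obtain ⟨v, hv⟩ := exists_norm_eq E zero_le_one
  have hcover : sphere (0 : E) 1 ⊆
      {x ∈ sphere 0 1 | ⟪v, x⟫ ≤ 0} ∪ {x ∈ sphere 0 1 | ⟪-v, x⟫ ≤ 0} := fun x hx => by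
    rcases le_total ⟪v, x⟫ 0 with h | h
    · exact .inl ⟨hx, h⟩
    · exact .inr ⟨hx, by rwa [inner_neg_left, neg_nonpos]⟩
  refine (measure_mono hcover).trans_lt ((measure_union_le _ _).trans_lt ?_)
  exact ENNReal.add_lt_top.mpr ⟨hausdorffMeasure_sphere_inter_inner_nonpos_lt_top hv,
    hausdorffMeasure_sphere_inter_inner_nonpos_lt_top (by rwa [norm_neg])⟩

theorem hausdorffMeasure_sphere_inter_abs_inner_lt_one_pos {v w : E} (hv : ‖v‖ = 1)
    (hw : ‖w‖ = 1) (hvw : ⟪v, w⟫ = 0) :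
    0 < μH[k] {x ∈ sphere (0 : E) 1 | |⟪w, x⟫| < 1} := by
  have : FiniteDimensional ℝ E := .of_fact_finrank_eq_succ k
  set K := (ℝ ∙ v)ᗮ
  have hrank : finrank ℝ K = k :=
    Submodule.finrank_orthogonal_span_singleton (by rintro rfl; simp at hv)
  have hball : ball (0 : K) 1 ⊆
      K.orthogonalProjectionOnto '' {x ∈ sphere (0 : E) 1 | |⟪w, x⟫| < 1} := by
    intro y hy
    have hy1 : ‖y‖ < 1 := mem_ball_zero_iff.mp hy
    have hyv : ⟪v, (y : E)⟫ = 0 := Submodule.mem_orthogonal_singleton_iff_inner_right.mp y.2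
    refine ⟨(y : E) + √(1 - ‖y‖ ^ 2) • v, ⟨?_, ?_⟩, ?_⟩
    · have hy0 : 0 ≤ 1 - ‖y‖ ^ 2 := by nlinarith [norm_nonneg y]
      rw [mem_sphere_zero_iff_norm, ← pow_eq_one_iff_of_nonneg (norm_nonneg _) two_ne_zero, sq,
        norm_add_sq_eq_norm_sq_add_norm_sq_of_inner_eq_zero _ _
          (by rw [inner_smul_right, real_inner_comm, hyv, mul_zero]),
        norm_smul, hv, mul_one, Real.norm_of_nonneg (Real.sqrt_nonneg _), Real.mul_self_sqrt hy0,
        Submodule.coe_norm]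
      ring
    · have hwy : |⟪w, (y : E)⟫| < 1 :=
        (abs_real_inner_le_norm w y).trans_lt (by rw [hw, one_mul]; exact hy1)
      rwa [inner_add_right, inner_smul_right, real_inner_comm v w, hvw, mul_zero, add_zero]
    · rw [map_add, map_smul, K.orthogonalProjectionOnto_mem_subspace_eq_self,
        Submodule.orthogonalProjectionOnto_orthogonalComplement_singleton_eq_zero, smul_zero,
        add_zero]
  have hpos : 0 < μH[k] (ball (0 : K) 1) := by
    rw [← hrank]; exact measure_ball_pos _ _ one_pos
  calc 0 < μH[k] (ball (0 : K) 1) := hpos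
    _ ≤ μH[k] (K.orthogonalProjectionOnto '' {x ∈ sphere (0 : E) 1 | |⟪w, x⟫| < 1}) :=
      measure_mono hball
    _ ≤ 1 ^ (k : ℝ) * μH[k] {x ∈ sphere (0 : E) 1 | |⟪w, x⟫| < 1} :=
      K.lipschitzWith_orthogonalProjectionOnto.hausdorffMeasure_image_le k.cast_nonneg _
    _ = _ := by rw [ENNReal.one_rpow, one_mul]

theorem integral_sphere_one_sub_inner_sq_mul_pos (hk : 1 ≤ k) {w : E} (hw : ‖w‖ = 1)
    {g : E → ℝ} (hg : ContinuousOn g (sphere 0 1)) (hg_pos : ∀ x ∈ sphere (0 : E) 1, 0 < g x) :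
    0 < ∫ x in sphere (0 : E) 1, (1 - ⟪w, x⟫ ^ 2) * g x ∂μH[k] := by
  have : FiniteDimensional ℝ E := .of_fact_finrank_eq_succ k
  obtain ⟨v, hv, hvw⟩ : ∃ v : E, ‖v‖ = 1 ∧ ⟪v, w⟫ = 0 := by
    have : Nontrivial (ℝ ∙ w)ᗮ := Module.nontrivial_of_finrank_pos <| by
      rw [Submodule.finrank_orthogonal_span_singleton (n := k) (by rintro rfl; simp at hw)]
      exact hk
    obtain ⟨u, hu⟩ := exists_norm_eq (ℝ ∙ w)ᗮ zero_le_one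
    exact ⟨u, hu, Submodule.mem_orthogonal_singleton_iff_inner_left.mp u.2⟩
  have hS := isCompact_sphere (0 : E) 1
  have hf : ContinuousOn (fun x => (1 - ⟪w, x⟫ ^ 2) * g x) (sphere 0 1) :=
    (Continuous.continuousOn (by fun_prop)).mul hg
  have habs : ∀ x ∈ sphere (0 : E) 1, |⟪w, x⟫| ≤ 1 := fun x hx => by
    simpa [hw, mem_sphere_zero_iff_norm.mp hx] using abs_real_inner_le_norm w x
  have hnonneg : ∀ x ∈ sphere (0 : E) 1, 0 ≤ (1 - ⟪w, x⟫ ^ 2) * g x := fun x hx =>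
    mul_nonneg (by nlinarith [abs_le.mp (habs x hx)]) (hg_pos x hx).le
  have hsupp : {x ∈ sphere (0 : E) 1 | |⟪w, x⟫| < 1} ⊆
      Function.support (fun x => (1 - ⟪w, x⟫ ^ 2) * g x) ∩ sphere 0 1 := fun x ⟨hx, hwx⟩ =>
    ⟨(mul_pos (by nlinarith [abs_lt.mp hwx]) (hg_pos x hx)).ne', hx⟩
  refine (setIntegral_pos_iff_support_of_nonneg_ae
    (ae_restrict_of_forall_mem hS.measurableSet hnonneg)
    (hf.integrableOn_of_subset_isCompact hS hS.measurableSet subset_rfl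
      (hausdorffMeasure_sphere_lt_top (k := k)).ne)).mpr ?_
  exact (hausdorffMeasure_sphere_inter_abs_inner_lt_one_pos hv hw hvw).trans_le
    (measure_mono hsupp)

end Sphere

theorem stmt7_general (m : ℕ) (hm : 2 ≤ m)
    (K : EuclideanSpace ℝ (Fin (m + 1)) → ℝ)
    (hKW : ∀ v : EuclideanSpace ℝ (Fin (m + 1)) → ℝ,
      ContinuousOn v (Metric.sphere (0 : EuclideanSpace ℝ (Fin (m + 1))) 1) →
      (∀ η ∈ Metric.sphere (0 : EuclideanSpace ℝ (Fin (m + 1))) 1, 0 < v η) →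
      (∀ η ∈ Metric.sphere (0 : EuclideanSpace ℝ (Fin (m + 1))) 1,
        K η * v η ^ (((m : ℝ) + 1) / ((m : ℝ) - 1)) =
          ∫ ξ in Metric.ball (0 : EuclideanSpace ℝ (Fin (m + 1))) 1,
            poissonKernelBall (m + 1) η ξ *
              poissonExtBall (m + 1) v ξ ^ (((m : ℝ) + 3) / ((m : ℝ) - 1))) →
      ∫ η in Metric.sphere (0 : EuclideanSpace ℝ (Fin (m + 1))) 1,
        (1 - (η (Fin.last m)) ^ 2) * v η ^ ((2 * (m : ℝ)) / ((m : ℝ) - 1)) ∂μH[(m : ℝ)] = 0) :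
    ¬ ∃ v : EuclideanSpace ℝ (Fin (m + 1)) → ℝ,
      ContinuousOn v (Metric.sphere (0 : EuclideanSpace ℝ (Fin (m + 1))) 1) ∧
      (∀ η ∈ Metric.sphere (0 : EuclideanSpace ℝ (Fin (m + 1))) 1, 0 < v η) ∧
      (∀ η ∈ Metric.sphere (0 : EuclideanSpace ℝ (Fin (m + 1))) 1,
        K η * v η ^ (((m : ℝ) + 1) / ((m : ℝ) - 1)) =
          ∫ ξ in Metric.ball (0 : EuclideanSpace ℝ (Fin (m + 1))) 1,
            poissonKernelBall (m + 1) η ξ *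
              poissonExtBall (m + 1) v ξ ^ (((m : ℝ) + 3) / ((m : ℝ) - 1))) := by
  rintro ⟨v, hv_cont, hv_pos, hv_eq⟩
  have : Fact (finrank ℝ (EuclideanSpace ℝ (Fin (m + 1))) = m + 1) := ⟨finrank_euclideanSpace_fin⟩
  have hpos := integral_sphere_one_sub_inner_sq_mul_pos (k := m)
    (w := EuclideanSpace.single (Fin.last m) 1) (by omega) (by simp)
    (hv_cont.rpow_const fun η hη => .inl (hv_pos η hη).ne')
    fun η hη => Real.rpow_pos_of_pos (hv_pos η hη) ((2 * (m : ℝ)) / ((m : ℝ) - 1))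
  simp only [EuclideanSpace.inner_single_left, map_one, one_mul] at hpos
  exact hpos.ne' (hKW v hv_cont hv_pos hv_eq)

/-- for `K(ξ) = ξ_n + 2` (here `n = m + 1 ≥ 3`), the integral equation
`K(η) v(η)^{n/(n-2)} = ∫_{B_1} P(η,ξ) (Pv(ξ))^{(n+2)/(n-2)} dξ` has no positive continuous
solution, assuming the Kazdan–Warner identity
`∫_{∂B_1} (∇_X K) v^{2(n-1)/(n-2)} ds = 0` for every positive solution, with `X` the
(tangential) gradient field of `ξ ↦ ξ_n` on the sphere, for which `∇_X K(η) = 1 − η_n²`. -/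
theorem stmt7 (m : ℕ) (hm : 2 ≤ m)
    (K : EuclideanSpace ℝ (Fin (m + 1)) → ℝ) (hK : ∀ ξ, K ξ = ξ (Fin.last m) + 2)
    (hKW : ∀ v : EuclideanSpace ℝ (Fin (m + 1)) → ℝ,
      ContinuousOn v (Metric.sphere (0 : EuclideanSpace ℝ (Fin (m + 1))) 1) →
      (∀ η ∈ Metric.sphere (0 : EuclideanSpace ℝ (Fin (m + 1))) 1, 0 < v η) →
      (∀ η ∈ Metric.sphere (0 : EuclideanSpace ℝ (Fin (m + 1))) 1,
        K η * v η ^ (((m : ℝ) + 1) / ((m : ℝ) - 1)) =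
          ∫ ξ in Metric.ball (0 : EuclideanSpace ℝ (Fin (m + 1))) 1,
            poissonKernelBall (m + 1) η ξ *
              poissonExtBall (m + 1) v ξ ^ (((m : ℝ) + 3) / ((m : ℝ) - 1))) →
      ∫ η in Metric.sphere (0 : EuclideanSpace ℝ (Fin (m + 1))) 1,
        (1 - (η (Fin.last m)) ^ 2) * v η ^ ((2 * (m : ℝ)) / ((m : ℝ) - 1)) ∂μH[(m : ℝ)] = 0) :
    ¬ ∃ v : EuclideanSpace ℝ (Fin (m + 1)) → ℝ,
      ContinuousOn v (Metric.sphere (0 : EuclideanSpace ℝ (Fin (m + 1))) 1) ∧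
      (∀ η ∈ Metric.sphere (0 : EuclideanSpace ℝ (Fin (m + 1))) 1, 0 < v η) ∧
      (∀ η ∈ Metric.sphere (0 : EuclideanSpace ℝ (Fin (m + 1))) 1,
        K η * v η ^ (((m : ℝ) + 1) / ((m : ℝ) - 1)) =
          ∫ ξ in Metric.ball (0 : EuclideanSpace ℝ (Fin (m + 1))) 1,
            poissonKernelBall (m + 1) η ξ *
              poissonExtBall (m + 1) v ξ ^ (((m : ℝ) + 3) / ((m : ℝ) - 1))) :=
  stmt7_general m hm K hKW
end

section
/- Let φ be a positive continuous function on ℝ^{n-1} with φ(x') ≥ c > 0 on a ball B'_δ ⊂ ℝ^{n-1}. Then its Poisson extension satisfies Pφ(y) ≥ (1/C) · y_n / (1 + |y|)^n for all y in the upper half space, where C depends only on n, δ, c. -/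
open MeasureTheory

/-- The Poisson kernel of the upper half space `ℝ^{m+1}_+`. -/
noncomputable def poissonKernelHalf (m : ℕ) (y' x' : EuclideanSpace ℝ (Fin m)) (t : ℝ) : ℝ :=
  (2 / (((m : ℝ) + 1) * ballVol (m + 1))) * t /
    (dist x' y' ^ 2 + t ^ 2) ^ (((m : ℝ) + 1) / 2)

lemma ballVol_pos (n : ℕ) : 0 < ballVol n := by
  have h1 : (0 : ENNReal) < volume (Metric.ball (0 : EuclideanSpace ℝ (Fin n)) 1) :=
    Metric.measure_ball_pos _ _ one_pos
  have h2 : volume (Metric.ball (0 : EuclideanSpace ℝ (Fin n)) 1) < ⊤ :=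
    measure_ball_lt_top
  exact ENNReal.toReal_pos h1.ne' h2.ne

/-- if `φ ≥ 0` is continuous on `ℝ^{n-1}` with `φ ≥ c > 0` on a ball `B'_δ`,
then the Poisson extension satisfies `Pφ(y) ≥ (1/C) y_n/(1+|y|)^n` on the upper half space,
with `C = C(n,δ,c) > 0`.  Here `n = m + 1 ≥ 2` and `|y|² = |y'|² + y_n²`; the extension is
written as a lower Lebesgue integral. -/
theorem stmt10 (m : ℕ) (hm : 1 ≤ m) (δ c : ℝ) (hδ : 0 < δ) (hc : 0 < c) :
    ∃ C : ℝ, 0 < C ∧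
      ∀ φ : EuclideanSpace ℝ (Fin m) → ℝ, Continuous φ → (∀ x', 0 ≤ φ x') →
        (∀ x' ∈ Metric.ball (0 : EuclideanSpace ℝ (Fin m)) δ, c ≤ φ x') →
        ∀ (y' : EuclideanSpace ℝ (Fin m)) (t : ℝ), 0 < t →
          ENNReal.ofReal ((1 / C) * t / (1 + Real.sqrt (‖y'‖ ^ 2 + t ^ 2)) ^ (m + 1)) ≤
            ∫⁻ x', ENNReal.ofReal (poissonKernelHalf m x' y' t * φ x') := by
  set E := EuclideanSpace ℝ (Fin m)
  have hV1 : 0 < ballVol (m + 1) := ballVol_pos (m + 1)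
  set K : ℝ := 2 / (((m : ℝ) + 1) * ballVol (m + 1)) with hKdef
  have hK0 : 0 < K := by positivity
  set Mx : ℝ := max δ 2 with hMxdef
  have hMx0 : 0 < Mx := lt_max_of_lt_right two_pos
  have hVtop : volume (Metric.ball (0 : E) δ) ≠ ⊤ := measure_ball_lt_top.ne
  set V : ℝ := (volume (Metric.ball (0 : E) δ)).toReal with hVdef
  have hV0 : 0 < V :=
    ENNReal.toReal_pos (Metric.measure_ball_pos _ _ hδ).ne' hVtop
  refine ⟨Mx ^ (m + 1) / (K * c * V), by positivity, ?_⟩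
  intro φ hφcont hφ0 hφc y' t ht
  set R : ℝ := Real.sqrt (‖y'‖ ^ 2 + t ^ 2) with hRdef
  have hR0 : 0 ≤ R := Real.sqrt_nonneg _
  have h1R : 0 < 1 + R := by linarith
  set a : ℝ := K * t / (Mx * (1 + R)) ^ (m + 1) * c with hadef
  have ha0 : 0 ≤ a := by positivity
  have key : ∀ x' ∈ Metric.ball (0 : E) δ,
      ENNReal.ofReal a ≤ ENNReal.ofReal (poissonKernelHalf m x' y' t * φ x') := by
    intro x' hx'
    apply ENNReal.ofReal_le_ofReal
    have hd : dist y' x' ≤ δ + ‖y'‖ := by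
      calc dist y' x' ≤ dist y' 0 + dist 0 x' := dist_triangle _ _ _
        _ ≤ ‖y'‖ + δ := by
            rw [dist_zero_right, dist_comm, ← dist_zero_right]
            exact add_le_add le_rfl (le_of_lt (Metric.mem_ball.mp hx'))
        _ = δ + ‖y'‖ := by ring
    have hy'R : ‖y'‖ ≤ R := by
      rw [hRdef]
      refine le_trans ?_ (Real.sqrt_le_sqrt (by nlinarith : ‖y'‖ ^ 2 ≤ ‖y'‖ ^ 2 + t ^ 2))
      rw [Real.sqrt_sq (norm_nonneg _)]
    have htR : t ≤ R := by
      rw [hRdef]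
      refine le_trans ?_ (Real.sqrt_le_sqrt (by nlinarith : t ^ 2 ≤ ‖y'‖ ^ 2 + t ^ 2))
      rw [Real.sqrt_sq ht.le]
    have hs : Real.sqrt (dist y' x' ^ 2 + t ^ 2) ≤ Mx * (1 + R) := by
      have h1 : Real.sqrt (dist y' x' ^ 2 + t ^ 2) ≤ dist y' x' + t := by
        refine le_trans (Real.sqrt_le_sqrt (by nlinarith [dist_nonneg (x := y') (y := x')] :
          dist y' x' ^ 2 + t ^ 2 ≤ (dist y' x' + t) ^ 2)) ?_
        rw [Real.sqrt_sq (by positivity)]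
      have hδM : δ ≤ Mx := le_max_left _ _
      have h2M : (2 : ℝ) ≤ Mx := le_max_right _ _
      nlinarith
    have hD0 : (0 : ℝ) < dist y' x' ^ 2 + t ^ 2 := by positivity
    have hDeq : (dist y' x' ^ 2 + t ^ 2) ^ (((m : ℝ) + 1) / 2)
        = Real.sqrt (dist y' x' ^ 2 + t ^ 2) ^ (m + 1) := by
      rw [Real.sqrt_eq_rpow, ← Real.rpow_natCast ((dist y' x' ^ 2 + t ^ 2) ^ ((1:ℝ)/2)) (m + 1),
        ← Real.rpow_mul hD0.le]
      norm_num
      ring_nf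
    have hDle : (dist y' x' ^ 2 + t ^ 2) ^ (((m : ℝ) + 1) / 2) ≤ (Mx * (1 + R)) ^ (m + 1) := by
      rw [hDeq]
      exact pow_le_pow_left₀ (Real.sqrt_nonneg _) hs _
    have hDpos : (0 : ℝ) < (dist y' x' ^ 2 + t ^ 2) ^ (((m : ℝ) + 1) / 2) :=
      Real.rpow_pos_of_pos hD0 _
    rw [poissonKernelHalf, hadef]
    have step1 : K * t / (Mx * (1 + R)) ^ (m + 1)
        ≤ K * t / (dist y' x' ^ 2 + t ^ 2) ^ (((m : ℝ) + 1) / 2) :=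
      div_le_div_of_nonneg_left (by positivity) hDpos hDle
    calc K * t / (Mx * (1 + R)) ^ (m + 1) * c
        ≤ K * t / (dist y' x' ^ 2 + t ^ 2) ^ (((m : ℝ) + 1) / 2) * c := by
          exact mul_le_mul_of_nonneg_right step1 hc.le
      _ ≤ K * t / (dist y' x' ^ 2 + t ^ 2) ^ (((m : ℝ) + 1) / 2) * φ x' := by
          exact mul_le_mul_of_nonneg_left (hφc x' hx') (by positivity)
      _ = 2 / (((m : ℝ) + 1) * ballVol (m + 1)) * t
            / (dist y' x' ^ 2 + t ^ 2) ^ (((m : ℝ) + 1) / 2) * φ x' := by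
          rw [hKdef]
  calc ENNReal.ofReal (1 / (Mx ^ (m + 1) / (K * c * V)) * t / (1 + R) ^ (m + 1))
      = ENNReal.ofReal a * volume (Metric.ball (0 : E) δ) := by
        rw [← ENNReal.ofReal_toReal hVtop, ← hVdef, ← ENNReal.ofReal_mul ha0]
        congr 1
        rw [hadef, mul_pow]
        field_simp
    _ = ∫⁻ _ in Metric.ball (0 : E) δ, ENNReal.ofReal a := (setLIntegral_const _ _).symm
    _ ≤ ∫⁻ x' in Metric.ball (0 : E) δ, ENNReal.ofReal (poissonKernelHalf m x' y' t * φ x') :=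
        setLIntegral_mono' measurableSet_ball key
    _ ≤ ∫⁻ x', ENNReal.ofReal (poissonKernelHalf m x' y' t * φ x') :=
        setLIntegral_le_lintegral _ _
end
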